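/- arXiv:2605.14694 — 3 statements merged into one kernel-verified Lean document; each statement's English description precedes it below -/
import Mathlib

section
/- In the three-concept DGP with TopK=2, with L(θ) = E_p|S △ Ŝ_θ(S)|, the monosemantic code θ_M^{jk} has strictly larger loss than the feature-splitting code θ_S^{ij,j} (one atom writing v_i + v_j active iff {i,j} ⊆ S, one atom writing v_j active iff j ∈ S and i ∉ S) if and only if p_{ij} > p_k + p_{ik} + p_{jk}. -/
/-- `Fin 3` indexes the three concepts; since they are orthonormal, the expected symmetric
difference is the mean squared error. -/
def symmLoss (p : Finset (Fin 3) → ℝ) (f : Finset (Fin 3) → Finset (Fin 3)) : ℝ :=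
  ∑ S : Finset (Fin 3), p S * (((S \ f S) ∪ (f S \ S)).card : ℝ)

/-!
Both codes only ever reconstruct subsets of `S`, so each loss is `E|S| - E|Ŝ|` and the gap
between them is `E|Ŝ_split| - E|Ŝ_mono| = P({i,j} ⊆ S) - P(k ∈ S)`. In this difference the
mass of `{i,j,k}` cancels, leaving `p_{ij} - (p_k + p_{ik} + p_{jk})`.
-/

open Finset

section

variable {α : Type*} [DecidableEq α]

/-- The feature-splitting code `θ_S^{ij,j}`. -/
def splitCode (i j : α) (S : Finset α) : Finset α :=
  if {i, j} ⊆ S then {i, j} else if j ∈ S then {j} else ∅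

theorem splitCode_subset (i j : α) (S : Finset α) : splitCode i j S ⊆ S := by
  unfold splitCode
  split_ifs with hij hj
  · exact hij
  · exact singleton_subset_iff.mpr hj
  · exact empty_subset S

theorem card_splitCode {i j : α} (hij : i ≠ j) (S : Finset α) :
    #(splitCode i j S) = (if j ∈ S then 1 else 0) + if {i, j} ⊆ S then 1 else 0 := by
  unfold splitCode
  split_ifs <;> simp_all [insert_subset_iff]

theorem card_inter_pair {j k : α} (hjk : j ≠ k) (S : Finset α) :
    #(S ∩ {j, k}) = (if j ∈ S then 1 else 0) + if k ∈ S then 1 else 0 := by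
  by_cases hj : j ∈ S <;> by_cases hk : k ∈ S <;>
    simp [inter_insert_of_mem, inter_insert_of_notMem, hj, hk, hjk]

end

theorem symmLoss_eq_of_subset (p : Finset (Fin 3) → ℝ) {f : Finset (Fin 3) → Finset (Fin 3)}
    (hf : ∀ S, f S ⊆ S) : symmLoss p f = ∑ S, p S * ((#S : ℝ) - #(f S)) := by
  refine sum_congr rfl fun S _ => ?_
  rw [sdiff_eq_empty_iff_subset.mpr (hf S), union_empty, card_sdiff_of_subset (hf S),
    Nat.cast_sub (card_le_card (hf S))]

theorem sum_mul_indicator_pair_sub_indicator (p : Finset (Fin 3) → ℝ) {i j k : Fin 3}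
    (hij : i ≠ j) (hik : i ≠ k) (hjk : j ≠ k) :
    ∑ S, p S * ((if {i, j} ⊆ S then 1 else 0) - if k ∈ S then 1 else 0) =
      p {i, j} - (p {k} + p {i, k} + p {j, k}) := by
  have indicator_eq : ∀ S : Finset (Fin 3),
      ((if {i, j} ⊆ S then 1 else 0) - (if k ∈ S then 1 else 0) : ℝ) =
        (if S = {i, j} then 1 else 0) - (if S = {k} then 1 else 0) -
          (if S = {i, k} then 1 else 0) - (if S = {j, k} then 1 else 0) := by
    -- over `ℤ`, so that `decide` can check every `i j k S`
    have on_fin_three : ∀ S : Finset (Fin 3),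
        ((if {i, j} ⊆ S then 1 else 0) - (if k ∈ S then 1 else 0) : ℤ) =
          (if S = {i, j} then 1 else 0) - (if S = {k} then 1 else 0) -
            (if S = {i, k} then 1 else 0) - (if S = {j, k} then 1 else 0) := by
      revert i j k
      decide
    exact fun S => mod_cast on_fin_three S
  simp only [indicator_eq, mul_sub, mul_ite, mul_one, mul_zero, sum_sub_distrib, sum_ite_eq',
    mem_univ, if_true]
  ring

theorem splitting_condition_K2_general
    (p : Finset (Fin 3) → ℝ)
    (i j k : Fin 3) (hij : i ≠ j) (hik : i ≠ k) (hjk : j ≠ k) :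
    symmLoss p (fun S => S ∩ ({j, k} : Finset (Fin 3))) -
      symmLoss p (fun S =>
        if ({i, j} : Finset (Fin 3)) ⊆ S then ({i, j} : Finset (Fin 3))
        else if j ∈ S then ({j} : Finset (Fin 3)) else ∅) > 0 ↔
    p {i, j} > p {k} + p {i, k} + p {j, k} := by
  have gap : symmLoss p (fun S => S ∩ {j, k}) - symmLoss p (splitCode i j) =
      p {i, j} - (p {k} + p {i, k} + p {j, k}) := by
    rw [symmLoss_eq_of_subset p fun S => inter_subset_left,
      symmLoss_eq_of_subset p (splitCode_subset i j), ← sum_sub_distrib,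
      ← sum_mul_indicator_pair_sub_indicator p hij hik hjk]
    refine sum_congr rfl fun S _ => ?_
    rw [card_inter_pair hjk, card_splitCode hij]
    push_cast
    ring
  exact gap.symm ▸ sub_pos

/-- in the three-concept DGP with TopK = 2, the monosemantic code
`θ_M^{jk}` (reconstructing `S ∩ {j,k}`) has strictly larger loss than the
feature-splitting code `θ_S^{ij,j}` (reconstructing `{i,j}` when `{i,j} ⊆ S`,
`{j}` when `j ∈ S` and `i ∉ S`, and `∅` otherwise) iff
`p_{ij} > p_k + p_{ik} + p_{jk}`. -/
theorem splitting_condition_K2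
    (p : Finset (Fin 3) → ℝ) (hp0 : ∀ S, 0 ≤ p S)
    (hp1 : ∑ S : Finset (Fin 3), p S = 1)
    (i j k : Fin 3) (hij : i ≠ j) (hik : i ≠ k) (hjk : j ≠ k) :
    symmLoss p (fun S => S ∩ ({j, k} : Finset (Fin 3))) -
      symmLoss p (fun S =>
        if ({i, j} : Finset (Fin 3)) ⊆ S then ({i, j} : Finset (Fin 3))
        else if j ∈ S then ({j} : Finset (Fin 3)) else ∅) > 0 ↔
    p {i, j} > p {k} + p {i, k} + p {j, k} :=
  splitting_condition_K2_general p i j k hij hik hjk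
end

section
/- Let v_1,...,v_n be orthonormal, p a pmf on subsets of {1,...,n}, and let θ be any code that on input S outputs the reconstruction x̂ = Σ_{r=1}^m a_r(S) v_{ℓ(r)} for binary activations a_r(S) ∈ {0,1} and an assignment ℓ : {1,...,m} → {1,...,n}. Define the clipped code θ' by a'_r(S) = a_r(S)·1{ℓ(r) ∈ S}. Then R(θ') ≤ R(θ) and D(θ') ≤ D(θ), where R is the expected number of active latents and D the expected squared error. -/
/-!
Clipping only switches latents off, so the rate drops for every input. A latent that clipping
switches off on input `S` writes some `v ℓ` with `ℓ ∉ S`, which is orthogonal to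
`span {v ℓ | ℓ ∈ S}`; that span contains both `x(S)` and the clipped reconstruction, so by
Pythagoras the unclipped error is the clipped error plus an orthogonal term.
-/

open Submodule

theorem Orthonormal.isOrtho_span_image_compl {𝕜 ι E : Type*} [RCLike 𝕜] [NormedAddCommGroup E]
    [InnerProductSpace 𝕜 E] {v : ι → E} (hv : Orthonormal 𝕜 v) (s : Set ι) :
    span 𝕜 (v '' s) ⟂ span 𝕜 (v '' sᶜ) := by
  rw [isOrtho_span]
  rintro _ ⟨i, hi, rfl⟩ _ ⟨j, hj, rfl⟩
  exact hv.inner_eq_zero (ne_of_mem_of_not_mem hi hj)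

theorem Orthonormal.norm_sub_sum_filter_mem_sq_le {ι κ E : Type*} [DecidableEq ι]
    [NormedAddCommGroup E] [InnerProductSpace ℝ E] {v : ι → E} (hv : Orthonormal ℝ v)
    {S : Finset ι} {x : E} (hx : x ∈ span ℝ (v '' S)) (A : Finset κ) (ℓ : κ → ι) (c : κ → ℝ) :
    ‖x - ∑ r ∈ A with ℓ r ∈ S, c r • v (ℓ r)‖ ^ 2 ≤ ‖x - ∑ r ∈ A, c r • v (ℓ r)‖ ^ 2 := by
  set kept := ∑ r ∈ A with ℓ r ∈ S, c r • v (ℓ r)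
  set dropped := ∑ r ∈ A with ℓ r ∉ S, c r • v (ℓ r)
  have hsplit : x - ∑ r ∈ A, c r • v (ℓ r) = (x - kept) - dropped := by
    rw [← Finset.sum_filter_add_sum_filter_not A (fun r => ℓ r ∈ S)]
    abel
  have hkept : x - kept ∈ span ℝ (v '' S) :=
    sub_mem hx (sum_mem fun r hr =>
      smul_mem _ _ (subset_span ⟨ℓ r, (Finset.mem_filter.1 hr).2, rfl⟩))
  have hdropped : dropped ∈ span ℝ (v '' (↑S)ᶜ) :=
    sum_mem fun r hr => smul_mem _ _ (subset_span ⟨ℓ r, (Finset.mem_filter.1 hr).2, rfl⟩)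
  rw [hsplit, sq, sq, norm_sub_sq_eq_norm_sq_add_norm_sq_real
    ((hv.isOrtho_span_image_compl S).inner_eq hkept hdropped)]
  exact le_add_of_nonneg_right (mul_self_nonneg _)

theorem clipping_weakly_dominates_general
    {n m : ℕ} {E : Type*} [NormedAddCommGroup E] [InnerProductSpace ℝ E]
    (v : Fin n → E) (hv : Orthonormal ℝ v)
    (p : Finset (Fin n) → ℝ) (hp0 : ∀ S, 0 ≤ p S)
    (ℓmap : Fin m → Fin n) (a : Finset (Fin n) → Fin m → Bool) :
    (∑ S : Finset (Fin n),
        p S * ∑ r : Fin m, (if a S r ∧ ℓmap r ∈ S then (1 : ℝ) else 0)) ≤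
      (∑ S : Finset (Fin n), p S * ∑ r : Fin m, (if a S r then (1 : ℝ) else 0)) ∧
    (∑ S : Finset (Fin n),
        p S * ‖(∑ ℓ ∈ S, v ℓ) -
          ∑ r : Fin m, (if a S r ∧ ℓmap r ∈ S then (1 : ℝ) else 0) • v (ℓmap r)‖ ^ 2) ≤
      (∑ S : Finset (Fin n),
        p S * ‖(∑ ℓ ∈ S, v ℓ) -
          ∑ r : Fin m, (if a S r then (1 : ℝ) else 0) • v (ℓmap r)‖ ^ 2) := by
  constructor
  · gcongr with S _ r
    · exact hp0 S
    · rw [ite_and]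
      split_ifs <;> norm_num
  · gcongr ∑ S, p S * ?_ with S
    · exact hp0 S
    have hclip : ∑ r : Fin m, (if a S r ∧ ℓmap r ∈ S then (1 : ℝ) else 0) • v (ℓmap r) =
        ∑ r with ℓmap r ∈ S, (if a S r then (1 : ℝ) else 0) • v (ℓmap r) := by
      rw [Finset.sum_filter]
      refine Finset.sum_congr rfl fun r _ => ?_
      by_cases h : ℓmap r ∈ S <;> simp [h]
    rw [hclip]
    exact hv.norm_sub_sum_filter_mem_sq_le
      (sum_mem fun ℓ hℓ => subset_span ⟨ℓ, hℓ, rfl⟩) _ _ _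

/-- clipping: for a code with `m` binary latents, latent `r`
writing `v (ℓmap r)` when active, suppressing every latent whose assigned
concept is absent from the input (`a' S r = a S r ∧ ℓmap r ∈ S`) weakly
decreases both the expected number of active latents (rate) and the expected
squared reconstruction error (distortion). -/
theorem clipping_weakly_dominates
    {n m : ℕ} {E : Type*} [NormedAddCommGroup E] [InnerProductSpace ℝ E]
    (v : Fin n → E) (hv : Orthonormal ℝ v)
    (p : Finset (Fin n) → ℝ) (hp0 : ∀ S, 0 ≤ p S)
    (hp1 : ∑ S : Finset (Fin n), p S = 1)
    (ℓmap : Fin m → Fin n) (a : Finset (Fin n) → Fin m → Bool) :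
    (∑ S : Finset (Fin n),
        p S * ∑ r : Fin m, (if a S r ∧ ℓmap r ∈ S then (1 : ℝ) else 0)) ≤
      (∑ S : Finset (Fin n), p S * ∑ r : Fin m, (if a S r then (1 : ℝ) else 0)) ∧
    (∑ S : Finset (Fin n),
        p S * ‖(∑ ℓ ∈ S, v ℓ) -
          ∑ r : Fin m, (if a S r ∧ ℓmap r ∈ S then (1 : ℝ) else 0) • v (ℓmap r)‖ ^ 2) ≤
      (∑ S : Finset (Fin n),
        p S * ‖(∑ ℓ ∈ S, v ℓ) -
          ∑ r : Fin m, (if a S r then (1 : ℝ) else 0) • v (ℓmap r)‖ ^ 2) :=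
  clipping_weakly_dominates_general v hv p hp0 ℓmap a
end

section
/- Let p be a pmf on subsets of {1,2,3}. For the TopK=2 setting, the hedged code θ_H^{jk,i} (one atom writing v_j + v_k active iff {j,k} ⊆ S, one atom writing v_i active iff i ∈ S) has strictly smaller expected symmetric-difference loss than the monosemantic code θ_M^{jk} (reconstructing S ∩ {j,k}) if and only if p_i + p_{ijk} > p_j + p_k. -/
open Finset

theorem Finset.sum_powerset_triple {α M : Type*} [DecidableEq α] [AddCommMonoid M]
    {i j k : α} (hij : i ≠ j) (hik : i ≠ k) (hjk : j ≠ k) (g : Finset α → M) :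
    ∑ S ∈ ({i, j, k} : Finset α).powerset, g S =
      g ∅ + g {i} + g {j} + g {k} + g {i, j} + g {i, k} + g {j, k} + g {i, j, k} := by
  have powerset_singleton : ({k} : Finset α).powerset = {∅, {k}} := by
    ext; simp [subset_singleton_iff]
  simp only [sum_powerset_insert (show i ∉ ({j, k} : Finset α) by simp [hij, hik]),
    sum_powerset_insert (show j ∉ ({k} : Finset α) by simp [hjk]), powerset_singleton,
    sum_pair (singleton_ne_empty k).symm, insert_empty]
  abel

namespace Fin

variable {i j k : Fin 3}

theorem triple_eq_univ (hij : i ≠ j) (hik : i ≠ k) (hjk : j ≠ k) :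
    ({i, j, k} : Finset (Fin 3)) = univ :=
  eq_univ_of_card _ (card_eq_three.mpr ⟨i, j, k, hij, hik, hjk, rfl⟩)

theorem sum_finset_three (hij : i ≠ j) (hik : i ≠ k) (hjk : j ≠ k)
    {M : Type*} [AddCommMonoid M] (g : Finset (Fin 3) → M) :
    ∑ S : Finset (Fin 3), g S =
      g ∅ + g {i} + g {j} + g {k} + g {i, j} + g {i, k} + g {j, k} + g {i, j, k} := by
  rw [← powerset_univ, ← triple_eq_univ hij hik hjk, sum_powerset_triple hij hik hjk]

theorem card_finset_three (hij : i ≠ j) (hik : i ≠ k) (hjk : j ≠ k) (T : Finset (Fin 3)) :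
    (#T : ℝ) = (if i ∈ T then 1 else 0) + (if j ∈ T then 1 else 0) + (if k ∈ T then 1 else 0) := by
  calc (#T : ℝ) = ∑ x ∈ {i, j, k}, if x ∈ T then 1 else 0 := by
        rw [sum_boole, filter_mem_eq_inter, triple_eq_univ hij hik hjk, univ_inter]
    _ = _ := by rw [sum_insert (by simp [hij, hik]), sum_pair hjk, add_assoc]

end Fin

section Losses

variable (p : Finset (Fin 3) → ℝ) {i j k : Fin 3}

theorem symmLoss_monosemantic (hij : i ≠ j) (hik : i ≠ k) (hjk : j ≠ k) :
    symmLoss p (fun S => S ∩ ({j, k} : Finset (Fin 3))) =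
      p {i} + p {i, j} + p {i, k} + p {i, j, k} := by
  rw [symmLoss, Fin.sum_finset_three hij hik hjk]
  simp only [Fin.card_finset_three hij hik hjk]
  simp [hij, hik, hjk, hij.symm, hik.symm, hjk.symm]

theorem symmLoss_hedged (hij : i ≠ j) (hik : i ≠ k) (hjk : j ≠ k) :
    symmLoss p (fun S =>
        (if ({j, k} : Finset (Fin 3)) ⊆ S then ({j, k} : Finset (Fin 3)) else ∅) ∪
        (if i ∈ S then ({i} : Finset (Fin 3)) else ∅)) =
      p {j} + p {k} + p {i, j} + p {i, k} := by
  rw [symmLoss, Fin.sum_finset_three hij hik hjk]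
  simp only [Fin.card_finset_three hij hik hjk]
  simp [hij, hik, hjk, hij.symm, hik.symm, hjk.symm, insert_subset_iff, -subset_singleton_iff]

end Losses

theorem hedging_condition_K2_jk_i_general
    (p : Finset (Fin 3) → ℝ)
    (i j k : Fin 3) (hij : i ≠ j) (hik : i ≠ k) (hjk : j ≠ k) :
    symmLoss p (fun S =>
        (if ({j, k} : Finset (Fin 3)) ⊆ S then ({j, k} : Finset (Fin 3)) else ∅) ∪
        (if i ∈ S then ({i} : Finset (Fin 3)) else ∅)) <
      symmLoss p (fun S => S ∩ ({j, k} : Finset (Fin 3))) ↔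
    p {i} + p {i, j, k} > p {j} + p {k} := by
  rw [symmLoss_hedged p hij hik hjk, symmLoss_monosemantic p hij hik hjk]
  constructor <;> intro h <;> linarith

/-- in the three-concept DGP with TopK = 2, the hedged code
`θ_H^{jk,i}` (joint atom `{j,k}` active iff `{j,k} ⊆ S`, plus atom `{i}` active
iff `i ∈ S`) has strictly smaller loss than the monosemantic code `θ_M^{jk}`
(reconstructing `S ∩ {j,k}`) iff `p_i + p_{ijk} > p_j + p_k`. -/
theorem hedging_condition_K2_jk_i
    (p : Finset (Fin 3) → ℝ) (hp0 : ∀ S, 0 ≤ p S)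
    (hp1 : ∑ S : Finset (Fin 3), p S = 1)
    (i j k : Fin 3) (hij : i ≠ j) (hik : i ≠ k) (hjk : j ≠ k) :
    symmLoss p (fun S =>
        (if ({j, k} : Finset (Fin 3)) ⊆ S then ({j, k} : Finset (Fin 3)) else ∅) ∪
        (if i ∈ S then ({i} : Finset (Fin 3)) else ∅)) <
      symmLoss p (fun S => S ∩ ({j, k} : Finset (Fin 3))) ↔
    p {i} + p {i, j, k} > p {j} + p {k} :=
  hedging_condition_K2_jk_i_general p i j k hij hik hjk
end
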